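/- Let C be a one-hole context over n variables and let k be the number of negation nodes on the hole path of C. Then for every Boolean formula ψ over n variables and every assignment x ∈ {0,1}^n that is relevant for C: eval(C[ψ], x) = eval(ψ, x) XOR (k mod 2). In particular, a relevant example is correlated (root value equals hole value) when the number of negations on the root–node path is even, and anticorrelated when it is odd. -/

import Mathlib

/-- Boolean formulas over `n` variables. -/
inductive BFormula (n : ℕ) : Type where
  | var : Fin n → BFormula n
  | not : BFormula n → BFormula n
  | and : BFormula n → BFormula n → BFormula n
  | or  : BFormula n → BFormula n → BFormula n

/-- Evaluation of a Boolean formula on an assignment. -/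
def BFormula.eval {n : ℕ} : BFormula n → (Fin n → Bool) → Bool
  | .var i, x => x i
  | .not φ, x => !(φ.eval x)
  | .and φ ψ, x => φ.eval x && ψ.eval x
  | .or φ ψ, x => φ.eval x || ψ.eval x

/-- One-hole contexts over `n` variables: a Boolean formula with exactly one hole. -/
inductive Ctx (n : ℕ) : Type where
  | hole : Ctx n
  | not : Ctx n → Ctx n
  | andL : Ctx n → BFormula n → Ctx n
  | andR : BFormula n → Ctx n → Ctx n
  | orL : Ctx n → BFormula n → Ctx n
  | orR : BFormula n → Ctx n → Ctx n

/-- `C.fill ψ` replaces the hole of `C` by the formula `ψ`. -/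
def Ctx.fill {n : ℕ} : Ctx n → BFormula n → BFormula n
  | .hole, ψ => ψ
  | .not C, ψ => .not (C.fill ψ)
  | .andL C φ, ψ => .and (C.fill ψ) φ
  | .andR φ C, ψ => .and φ (C.fill ψ)
  | .orL C φ, ψ => .or (C.fill ψ) φ
  | .orR φ C, ψ => .or φ (C.fill ψ)

/-- `C.evalWith h x` evaluates `C` at `x`, the hole taking the value `h x`. -/
def Ctx.evalWith {n : ℕ} : Ctx n → ((Fin n → Bool) → Bool) → (Fin n → Bool) → Bool
  | .hole, h, x => h x
  | .not C, h, x => !(C.evalWith h x)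
  | .andL C φ, h, x => C.evalWith h x && φ.eval x
  | .andR φ C, h, x => φ.eval x && C.evalWith h x
  | .orL C φ, h, x => C.evalWith h x || φ.eval x
  | .orR φ C, h, x => φ.eval x || C.evalWith h x

/-- An assignment `x` is relevant for `C` if flipping the value at the hole
flips the value at the root. -/
def Ctx.Relevant {n : ℕ} (C : Ctx n) (x : Fin n → Bool) : Prop :=
  C.evalWith (fun _ => false) x ≠ C.evalWith (fun _ => true) x

/-- The number of negation nodes on the path from the root of the context to the hole. -/
def Ctx.negCountOnHolePath {n : ℕ} : Ctx n → ℕ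
  | .hole => 0
  | .not C => C.negCountOnHolePath + 1
  | .andL C _ => C.negCountOnHolePath
  | .andR _ C => C.negCountOnHolePath
  | .orL C _ => C.negCountOnHolePath
  | .orR _ C => C.negCountOnHolePath

/-! At a fixed assignment the root value of `C` is a function of the hole value alone; relevance
says this function `Bool → Bool` is a bijection, hence `b ↦ xor b c` with `c` its value at
`false`. Relevance also forces the side formula of every `∧` on the hole path to be true and that
of every `∨` to be false, so these nodes pass the value through unchanged and only the negations
act: `c` is the parity of their number. -/

theorem Bool.apply_eq_xor_apply_false {f : Bool → Bool} (hf : f false ≠ f true) (b : Bool) :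
    f b = xor b (f false) := by
  cases b <;> cases h : f false <;> simp_all

theorem Nat.decide_add_one_mod_two_eq_one (k : ℕ) :
    decide ((k + 1) % 2 = 1) = !decide (k % 2 = 1) := by
  rcases Nat.mod_two_eq_zero_or_one k with h | h <;> simp [h, Nat.succ_mod_two_eq_one_iff]

namespace Ctx

variable {n : ℕ} {C : Ctx n} {φ : BFormula n} {x : Fin n → Bool}

theorem eval_fill (C : Ctx n) (ψ : BFormula n) (x : Fin n → Bool) :
    (C.fill ψ).eval x = C.evalWith (fun _ => ψ.eval x) x := by
  induction C <;> simp_all [fill, evalWith, BFormula.eval]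

@[simp]
theorem relevant_not_iff : (not C).Relevant x ↔ C.Relevant x := by
  simp [Relevant, evalWith]

@[simp]
theorem relevant_andL_iff : (andL C φ).Relevant x ↔ C.Relevant x ∧ φ.eval x = true := by
  cases h : φ.eval x <;> simp [Relevant, evalWith, h]

@[simp]
theorem relevant_andR_iff : (andR φ C).Relevant x ↔ C.Relevant x ∧ φ.eval x = true := by
  cases h : φ.eval x <;> simp [Relevant, evalWith, h]

@[simp]
theorem relevant_orL_iff : (orL C φ).Relevant x ↔ C.Relevant x ∧ φ.eval x = false := by
  cases h : φ.eval x <;> simp [Relevant, evalWith, h]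

@[simp]
theorem relevant_orR_iff : (orR φ C).Relevant x ↔ C.Relevant x ∧ φ.eval x = false := by
  cases h : φ.eval x <;> simp [Relevant, evalWith, h]

theorem evalWith_false_of_relevant (hx : C.Relevant x) :
    C.evalWith (fun _ => false) x = decide (C.negCountOnHolePath % 2 = 1) := by
  induction C with
  | hole => rfl
  | not C ih =>
    rw [evalWith, negCountOnHolePath, ih (by simpa using hx), Nat.decide_add_one_mod_two_eq_one]
  | andL C φ ih | andR φ C ih | orL C φ ih | orR φ C ih =>
    obtain ⟨hC, hφ⟩ := by simpa using hx
    rw [evalWith, negCountOnHolePath, ih hC, hφ]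
    simp only [Bool.and_true, Bool.true_and, Bool.or_false, Bool.false_or]

theorem Relevant.evalWith_const (hx : C.Relevant x) (b : Bool) :
    C.evalWith (fun _ => b) x = xor b (decide (C.negCountOnHolePath % 2 = 1)) := by
  rw [Bool.apply_eq_xor_apply_false (f := fun b => C.evalWith (fun _ => b) x) hx,
    evalWith_false_of_relevant hx]

end Ctx

/-- For a relevant assignment, the root value equals the hole value XORed with the
parity of the number of negations on the hole path: relevant examples are correlated
when this parity is even and anticorrelated when it is odd. -/
theorem impact_relevant_parity_correlation
    (n : ℕ) (C : Ctx n) (ψ : BFormula n) (x : Fin n → Bool) (hx : C.Relevant x) :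
    (C.fill ψ).eval x = xor (ψ.eval x) (decide (C.negCountOnHolePath % 2 = 1)) := by
  rw [C.eval_fill, hx.evalWith_const]
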